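/- arXiv:1003.0775 — 4 statements merged into one kernel-verified Lean document; each statement's English description precedes it below -/
import Mathlib

section
/- Suppose b = 1 (so m₀ = 3a + 1). Then in R = K[X₀,X₁,X₂,X₃] the following two polynomial identities hold: (i) ψ(1,0)φ(2,2) + ψ(1,2)φ(1,1) − ψ(1,1)φ(1,2) = 0; (ii) ψ(1,1)² − ψ(1,2)ψ(1,0) − X₃^{a−1}ψ(1,2)φ(2,2) + X₀^{a+d−1}ψ(1,0)φ(1,1) − X₃^{a−1}X₀^{a+d−1}(φ(1,2)² − φ(2,2)φ(1,1)) = 0. -/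
noncomputable section

open MvPolynomial

abbrev Vb (b : ℕ) : Type := Fin 4 ⊕ Fin (4 - b) ⊕ Fin 3

abbrev Rb (K : Type) [Field K] (b : ℕ) : Type := MvPolynomial (Vb b) K

abbrev R4 (K : Type) [Field K] : Type := MvPolynomial (Fin 4) K

def eps (i j : ℤ) : ℤ := if i + j < 3 then i + j else 3

variable (K : Type) [Field K] (a d b : ℕ)

/-- The variable `X_i` of `R_b`, with the convention `X_i = 0` for `i ∉ {0,1,2,3}`. -/
def Xv (i : ℤ) : Rb K b :=
  if h : 0 ≤ i ∧ i < 4 then X (Sum.inl ⟨i.toNat, by omega⟩) else 0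

/-- The variable `Ψ(b,j)` of `R_b`, with the convention `Ψ(b,j) = 0` for `j ∉ {0,…,3-b}`. -/
def Psi (j : ℤ) : Rb K b :=
  if h : 0 ≤ j ∧ j < 4 - (b : ℤ) then X (Sum.inr (Sum.inl ⟨j.toNat, by omega⟩)) else 0

/-- The variable `Φ(i,j)` of `R_b`, with `Φ(i,j) = Φ(j,i)` and `Φ(i,j) = 0` unless `i,j ∈ {1,2}`. -/
def Phi (i j : ℤ) : Rb K b :=
  if i = 1 ∧ j = 1 then X (Sum.inr (Sum.inr 2))
  else if (i = 1 ∧ j = 2) ∨ (i = 2 ∧ j = 1) then X (Sum.inr (Sum.inr 1))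
  else if i = 2 ∧ j = 2 then X (Sum.inr (Sum.inr 0))
  else 0

/-- `L(i) = X_iΦ(2,2) − X_{i+1}Φ(1,2) + X_{i+2}Φ(1,1)` for `i ∈ {0,1}`, `0` otherwise. -/
def Lp (i : ℤ) : Rb K b :=
  if i = 0 ∨ i = 1 then
    Xv K b i * Phi K b 2 2 - Xv K b (i + 1) * Phi K b 1 2 + Xv K b (i + 2) * Phi K b 1 1
  else 0

/-- `D = (X₁² − X₂X₀)Φ(1,2) − (X₁X₂ − X₃X₀)Φ(1,1)`. -/
def Dp : Rb K b :=
  (Xv K b 1 ^ 2 - Xv K b 2 * Xv K b 0) * Phi K b 1 2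
    - (Xv K b 1 * Xv K b 2 - Xv K b 3 * Xv K b 0) * Phi K b 1 1

/-- `B(i,j)`. -/
def Bp (i j : ℤ) : Rb K b :=
  (Xv K b i * Xv K b j - Xv K b (eps i j) * Xv K b (i + j - eps i j)) * Psi K b (3 - (b : ℤ))
    - (Xv K b 3 ^ a * Xv K b (b : ℤ) - Xv K b 0 ^ (a + d + 1)) * Phi K b i j

/-- `A(i;b,j)`. -/
def Ap (i j : ℤ) : Rb K b :=
  Xv K b i * Psi K b j
    - Xv K b ((b : ℤ) + i + j - eps i ((b : ℤ) + j)) * Psi K b (eps i ((b : ℤ) + j) - (b : ℤ))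
    - Xv K b 3 ^ a * Phi K b i ((b : ℤ) + j)
    + Xv K b 0 ^ (a + d) * (Phi K b i j - Phi K b ((b : ℤ) + i + j - 3) (3 - (b : ℤ)))

/-- `Q(b,i)`. -/
def Qp (i : ℕ) : Rb K b :=
  if b = 1 ∧ i = 1 then
    Psi K b 0 * Phi K b 2 2 + Psi K b 2 * Phi K b 1 1 - Psi K b 1 * Phi K b 1 2
  else if b = 1 ∧ i = 2 then
    Psi K b 1 ^ 2 - Psi K b 2 * Psi K b 0 - Xv K b 3 ^ (a - 1) * Psi K b 2 * Phi K b 2 2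
      + Xv K b 0 ^ (a + d - 1) * Psi K b 0 * Phi K b 1 1
      - Xv K b 3 ^ (a - 1) * Xv K b 0 ^ (a + d - 1) *
          (Phi K b 1 2 ^ 2 - Phi K b 2 2 * Phi K b 1 1)
  else if b = 2 ∧ i = 1 then
    Psi K b 0 ^ 2 * Phi K b 2 2 - Xv K b 3 ^ (a - 1) * Psi K b 1 * Phi K b 2 2 ^ 2
      - Psi K b 1 * Psi K b 0 * Phi K b 1 2
      - Xv K b 3 ^ (a - 1) * Xv K b 0 ^ (a + d - 1) * Phi K b 1 2 ^ 3
      + Psi K b 1 ^ 2 * Phi K b 1 1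
      + Xv K b 3 ^ (a - 1) * Xv K b 0 ^ (a + d - 1) * Phi K b 2 2 * Phi K b 1 2 * Phi K b 1 1
      + Xv K b 0 ^ (a + d - 1) * Psi K b 0 * Phi K b 1 1 ^ 2
  else 0

/-- `P(i,j) = tX_iX_j − tX_{ε(i,j)}X_{i+j−ε(i,j)} − Φ(i,j)` in `S = R_b[t]`. -/
def Pp (i j : ℤ) : Polynomial (Rb K b) :=
  Polynomial.X * Polynomial.C (Xv K b i * Xv K b j)
    - Polynomial.X * Polynomial.C (Xv K b (eps i j) * Xv K b (i + j - eps i j))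
    - Polynomial.C (Phi K b i j)

/-- `P(Ψ(b,l)) = tX_{b+l}X₃^a − tX_lX₀^{a+d} − Ψ(b,l)` in `S = R_b[t]`. -/
def PPsi (l : ℤ) : Polynomial (Rb K b) :=
  Polynomial.X * Polynomial.C (Xv K b ((b : ℤ) + l) * Xv K b 3 ^ a)
    - Polynomial.X * Polynomial.C (Xv K b l * Xv K b 0 ^ (a + d))
    - Polynomial.C (Psi K b l)

/-- The variable `X_i` of `R = K[X₀,X₁,X₂,X₃]`, with `X_i = 0` for `i ∉ {0,1,2,3}`. -/
def XR (i : ℤ) : R4 K :=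
  if h : 0 ≤ i ∧ i < 4 then X ⟨i.toNat, by omega⟩ else 0

/-- `φ(i,j) = X_iX_j − X_{ε(i,j)}X_{i+j−ε(i,j)}` for `i,j ∈ {1,2}`, `0` otherwise. -/
def phiR (i j : ℤ) : R4 K :=
  if (i = 1 ∨ i = 2) ∧ (j = 1 ∨ j = 2) then
    XR K i * XR K j - XR K (eps i j) * XR K (i + j - eps i j)
  else 0

/-- `ψ(b,j) = X_{b+j}X₃^a − X_jX₀^{a+d}` for `j ∈ {0,…,3-b}`, `0` otherwise. -/
def psiR (j : ℤ) : R4 K :=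
  if 0 ≤ j ∧ j ≤ 3 - (b : ℤ) then
    XR K ((b : ℤ) + j) * XR K 3 ^ a - XR K j * XR K 0 ^ (a + d)
  else 0

/-- `φ_b : R_b → R[t]`, `X_i ↦ X_i`, `Φ(i,j) ↦ φ(i,j)·t`, `Ψ(b,j) ↦ ψ(b,j)·t`. -/
def phib : Rb K b →ₐ[K] Polynomial (R4 K) :=
  aeval fun v =>
    match v with
    | Sum.inl i => Polynomial.C (X i)
    | Sum.inr (Sum.inl j) => Polynomial.C (psiR K a d b (j : ℤ)) * Polynomial.X
    | Sum.inr (Sum.inr k) =>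
        Polynomial.C (if k = 0 then phiR K 2 2 else if k = 1 then phiR K 1 2
          else phiR K 1 1) * Polynomial.X

/-- `η : R → K[T]`, `X_i ↦ T^{m_i}`. -/
def eta (m : Fin 4 → ℕ) : R4 K →ₐ[K] Polynomial K :=
  aeval fun i => Polynomial.X ^ (m i)


/-
The `φ(i,j)` are the `2 × 2` minors of `[[X₀, X₁, X₂], [X₁, X₂, X₃]]`, and the row
`(ψ(1,0), ψ(1,1), ψ(1,2))` is the combination `X₃^a · (second row) − X₀^{a+d} · (first row)`.
Identity (i) is the Laplace expansion of the `3 × 3` determinant with rows `ψ`, first row,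
second row, which vanishes for any coefficients of the combination. Identity (ii) holds for
coefficients of the form `X₃ u` and `X₀ v`, which `X₃^a` and `X₀^{a+d}` are once `a ≥ 1`.
-/

section Syzygies

variable {R : Type*} [CommRing R] (x₀ x₁ x₂ x₃ U V : R)

theorem rowCombination_minors_syzygy :
    (x₁ * U - x₀ * V) * (x₂ ^ 2 - x₃ * x₁) + (x₃ * U - x₂ * V) * (x₁ ^ 2 - x₂ * x₀)
      - (x₂ * U - x₁ * V) * (x₁ * x₂ - x₃ * x₀) = 0 := by
  ring

theorem rowCombination_quadratic_syzygy {u v : R} (hU : U = x₃ * u) (hV : V = x₀ * v) :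
    (x₂ * U - x₁ * V) ^ 2 - (x₃ * U - x₂ * V) * (x₁ * U - x₀ * V)
      - u * (x₃ * U - x₂ * V) * (x₂ ^ 2 - x₃ * x₁)
      + v * (x₁ * U - x₀ * V) * (x₁ ^ 2 - x₂ * x₀)
      - u * v * ((x₁ * x₂ - x₃ * x₀) ^ 2 - (x₂ ^ 2 - x₃ * x₁) * (x₁ ^ 2 - x₂ * x₀)) = 0 := by
  subst hU hV
  ring

end Syzygies

theorem psiR_one (j : ℤ) (hj₀ : 0 ≤ j) (hj₂ : j ≤ 2) :
    psiR K a d 1 j = XR K (1 + j) * XR K 3 ^ a - XR K j * XR K 0 ^ (a + d) :=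
  if_pos ⟨hj₀, by omega⟩

theorem phiR_one_one : phiR K 1 1 = XR K 1 ^ 2 - XR K 2 * XR K 0 := by
  norm_num [phiR, eps, sq]

theorem phiR_one_two : phiR K 1 2 = XR K 1 * XR K 2 - XR K 3 * XR K 0 := by
  norm_num [phiR, eps]

theorem phiR_two_two : phiR K 2 2 = XR K 2 ^ 2 - XR K 3 * XR K 1 := by
  norm_num [phiR, eps, sq]

theorem Q_identities_b_one_general (K : Type) [Field K] (a d : ℕ) (ha : 1 ≤ a) :
    psiR K a d 1 0 * phiR K 2 2 + psiR K a d 1 2 * phiR K 1 1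
        - psiR K a d 1 1 * phiR K 1 2 = 0 ∧
    psiR K a d 1 1 ^ 2 - psiR K a d 1 2 * psiR K a d 1 0
        - XR K 3 ^ (a - 1) * psiR K a d 1 2 * phiR K 2 2
        + XR K 0 ^ (a + d - 1) * psiR K a d 1 0 * phiR K 1 1
        - XR K 3 ^ (a - 1) * XR K 0 ^ (a + d - 1) *
            (phiR K 1 2 ^ 2 - phiR K 2 2 * phiR K 1 1) = 0 := by
  have hU : XR K 3 ^ a = XR K 3 * XR K 3 ^ (a - 1) := by
    rw [← pow_succ', Nat.sub_add_cancel ha]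
  have hV : XR K 0 ^ (a + d) = XR K 0 * XR K 0 ^ (a + d - 1) := by
    rw [← pow_succ', Nat.sub_add_cancel (by omega)]
  rw [psiR_one K a d 0 le_rfl (by norm_num), psiR_one K a d 1 (by norm_num) (by norm_num),
    psiR_one K a d 2 (by norm_num) le_rfl, phiR_one_one, phiR_one_two, phiR_two_two]
  norm_num only
  exact ⟨rowCombination_minors_syzygy .., rowCombination_quadratic_syzygy _ _ _ _ _ _ hU hV⟩

/-- Suppose `b = 1` (so `m₀ = 3a + 1`).  Then in `R = K[X₀,X₁,X₂,X₃]`: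
(i) `ψ(1,0)φ(2,2) + ψ(1,2)φ(1,1) − ψ(1,1)φ(1,2) = 0`;
(ii) `ψ(1,1)² − ψ(1,2)ψ(1,0) − X₃^{a−1}ψ(1,2)φ(2,2) + X₀^{a+d−1}ψ(1,0)φ(1,1)
      − X₃^{a−1}X₀^{a+d−1}(φ(1,2)² − φ(2,2)φ(1,1)) = 0`. -/
theorem Q_identities_b_one (K : Type) [Field K] (a d : ℕ) (ha : 1 ≤ a) (hd : 1 ≤ d) :
    psiR K a d 1 0 * phiR K 2 2 + psiR K a d 1 2 * phiR K 1 1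
        - psiR K a d 1 1 * phiR K 1 2 = 0 ∧
    psiR K a d 1 1 ^ 2 - psiR K a d 1 2 * psiR K a d 1 0
        - XR K 3 ^ (a - 1) * psiR K a d 1 2 * phiR K 2 2
        + XR K 0 ^ (a + d - 1) * psiR K a d 1 0 * phiR K 1 1
        - XR K 3 ^ (a - 1) * XR K 0 ^ (a + d - 1) *
            (phiR K 1 2 ^ 2 - phiR K 2 2 * phiR K 1 1) = 0 :=
  Q_identities_b_one_general K a d ha
end
end

section
/- Suppose b = 2 (so m₀ = 3a + 2). Then in R = K[X₀,X₁,X₂,X₃] the following polynomial identity holds: ψ(2,0)²φ(2,2) − X₃^{a−1}ψ(2,1)φ(2,2)² − ψ(2,1)ψ(2,0)φ(1,2) − X₃^{a−1}X₀^{a+d−1}φ(1,2)³ + ψ(2,1)²φ(1,1) + X₃^{a−1}X₀^{a+d−1}φ(2,2)φ(1,2)φ(1,1) + X₀^{a+d−1}ψ(2,0)φ(1,1)² = 0. -/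
noncomputable section

open MvPolynomial

variable (K : Type) [Field K] (a d b : ℕ)

/-! Writing `X₃^a = X₃·X₃^{a−1}` and `X₀^{a+d} = X₀·X₀^{a+d−1}`, the identity becomes a
polynomial identity in `X₀, …, X₃` and the two powers `X₃^{a−1}`, `X₀^{a+d−1}`, and it stays true
with these powers replaced by arbitrary elements `u`, `w` of any commutative ring. -/

theorem Q_two_one_relation {R : Type*} [CommRing R]
    {x₀ x₁ x₂ x₃ u w A B φ₁₁ φ₁₂ φ₂₂ ψ₀ ψ₁ : R}
    (hA : x₃ * u = A) (hB : x₀ * w = B)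
    (h₁₁ : φ₁₁ = x₁ ^ 2 - x₂ * x₀) (h₁₂ : φ₁₂ = x₁ * x₂ - x₃ * x₀)
    (h₂₂ : φ₂₂ = x₂ ^ 2 - x₃ * x₁)
    (hψ₀ : ψ₀ = x₂ * A - x₀ * B) (hψ₁ : ψ₁ = x₃ * A - x₁ * B) :
    ψ₀ ^ 2 * φ₂₂ - u * ψ₁ * φ₂₂ ^ 2 - ψ₁ * ψ₀ * φ₁₂ - u * w * φ₁₂ ^ 3 + ψ₁ ^ 2 * φ₁₁
      + u * w * φ₂₂ * φ₁₂ * φ₁₁ + w * ψ₀ * φ₁₁ ^ 2 = 0 := by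
  subst_vars
  ring

theorem psiR_two_zero : psiR K a d 2 0 = XR K 2 * XR K 3 ^ a - XR K 0 * XR K 0 ^ (a + d) := by
  norm_num [psiR]

theorem psiR_two_one : psiR K a d 2 1 = XR K 3 * XR K 3 ^ a - XR K 1 * XR K 0 ^ (a + d) := by
  norm_num [psiR]

theorem Q_identity_b_two_general (K : Type) [Field K] (a d : ℕ) (ha : 1 ≤ a) :
    psiR K a d 2 0 ^ 2 * phiR K 2 2
        - XR K 3 ^ (a - 1) * psiR K a d 2 1 * phiR K 2 2 ^ 2
        - psiR K a d 2 1 * psiR K a d 2 0 * phiR K 1 2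
        - XR K 3 ^ (a - 1) * XR K 0 ^ (a + d - 1) * phiR K 1 2 ^ 3
        + psiR K a d 2 1 ^ 2 * phiR K 1 1
        + XR K 3 ^ (a - 1) * XR K 0 ^ (a + d - 1) * phiR K 2 2 * phiR K 1 2 * phiR K 1 1
        + XR K 0 ^ (a + d - 1) * psiR K a d 2 0 * phiR K 1 1 ^ 2 = 0 :=
  Q_two_one_relation (mul_pow_sub_one (by omega) _) (mul_pow_sub_one (by omega) _)
    (phiR_one_one K) (phiR_one_two K) (phiR_two_two K) (psiR_two_zero K a d) (psiR_two_one K a d)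

/-- Suppose `b = 2` (so `m₀ = 3a + 2`).  Then in `R = K[X₀,X₁,X₂,X₃]`:
`ψ(2,0)²φ(2,2) − X₃^{a−1}ψ(2,1)φ(2,2)² − ψ(2,1)ψ(2,0)φ(1,2) − X₃^{a−1}X₀^{a+d−1}φ(1,2)³
 + ψ(2,1)²φ(1,1) + X₃^{a−1}X₀^{a+d−1}φ(2,2)φ(1,2)φ(1,1) + X₀^{a+d−1}ψ(2,0)φ(1,1)² = 0`. -/
theorem Q_identity_b_two (K : Type) [Field K] (a d : ℕ) (ha : 1 ≤ a) (hd : 1 ≤ d) :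
    psiR K a d 2 0 ^ 2 * phiR K 2 2
        - XR K 3 ^ (a - 1) * psiR K a d 2 1 * phiR K 2 2 ^ 2
        - psiR K a d 2 1 * psiR K a d 2 0 * phiR K 1 2
        - XR K 3 ^ (a - 1) * XR K 0 ^ (a + d - 1) * phiR K 1 2 ^ 3
        + psiR K a d 2 1 ^ 2 * phiR K 1 1
        + XR K 3 ^ (a - 1) * XR K 0 ^ (a + d - 1) * phiR K 2 2 * phiR K 1 2 * phiR K 1 1
        + XR K 0 ^ (a + d - 1) * psiR K a d 2 0 * phiR K 1 1 ^ 2 = 0 :=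
  Q_identity_b_two_general K a d ha
end
end

section
/- Let b ∈ {1,2,3}, i ∈ {1,2,3} and j ∈ {0,…,2−b} with b ≠ 3. Then in R = K[X₀,X₁,X₂,X₃] the following identity holds: X_i·ψ(b,j) − X_{b+i+j−ε(i,b+j)}·ψ(b,ε(i,b+j)−b) − X₃^a·φ(i,b+j) + X₀^{a+d}·(φ(i,j) − φ(b+i+j−3,3−b)) = 0, where by convention X_k := 0 for k ∉ {0,1,2,3}, φ(i,j) := φ(j,i), φ(i,j) := 0 unless i,j ∈ {1,2}, and ψ(b,j) := 0 unless j ∈ {0,…,3−b}. -/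
noncomputable section

open MvPolynomial

variable (K : Type) [Field K] (a d b : ℕ)

/-!
Modulo the quadrics `φ(p,q)`, a product `X_pX_q` is congruent to the standard monomial
`X_{ε(p,q)}X_{p+q-ε(p,q)}`, which depends only on the weight `p + q`. After expanding the two
`ψ`'s, the expression is `X₃^a` times such a congruence in weight `i + b + j`, plus `X₀^{a+d}` times
the difference of two such congruences in the same weight `i + j`.
-/

lemma eps_eq_min (p q : ℤ) : eps p q = min (p + q) 3 := by
  unfold eps
  split_ifs <;> omega

lemma phiR_eq_zero_of_left {p : ℤ} (hp : p ≠ 1 ∧ p ≠ 2) (q : ℤ) : phiR K p q = 0 :=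
  if_neg (by omega)

lemma psiR_of_mem {j : ℤ} (hj : 0 ≤ j ∧ j ≤ 3 - (b : ℤ)) :
    psiR K a d b j = XR K ((b : ℤ) + j) * XR K 3 ^ a - XR K j * XR K 0 ^ (a + d) :=
  if_pos hj

lemma XR_mul_XR_sub_phiR {p q : ℤ} (hp : 0 ≤ p ∧ p ≤ 3) (hq : 0 ≤ q ∧ q ≤ 3) :
    XR K p * XR K q - phiR K p q = XR K (eps p q) * XR K (p + q - eps p q) := by
  unfold phiR
  split_ifs with h
  · ring
  · have : (eps p q = p ∧ p + q - eps p q = q) ∨ (eps p q = q ∧ p + q - eps p q = p) := by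
      rw [eps_eq_min]
      omega
    rcases this with ⟨h₁, h₂⟩ | ⟨h₁, h₂⟩ <;> rw [h₂, h₁] <;> ring

lemma XR_mul_XR_sub_phiR_eq_of_add_eq {p q p' q' : ℤ} (hp : 0 ≤ p ∧ p ≤ 3)
    (hq : 0 ≤ q ∧ q ≤ 3) (hp' : 0 ≤ p' ∧ p' ≤ 3) (hq' : 0 ≤ q' ∧ q' ≤ 3)
    (h : p + q = p' + q') :
    XR K p * XR K q - phiR K p q = XR K p' * XR K q' - phiR K p' q' := by
  rw [XR_mul_XR_sub_phiR K hp hq, XR_mul_XR_sub_phiR K hp' hq', eps_eq_min, eps_eq_min, h]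

theorem A_identity_general (K : Type) [Field K] (a d b : ℕ)
    (hb : b ∈ ({1, 2, 3} : Set ℕ)) (hb3 : b ≠ 3) :
    ∀ i ∈ ({1, 2, 3} : Set ℤ), ∀ j : ℕ, j ≤ 2 - b →
      XR K i * psiR K a d b (j : ℤ)
          - XR K ((b : ℤ) + i + j - eps i ((b : ℤ) + j)) *
              psiR K a d b (eps i ((b : ℤ) + j) - (b : ℤ))
          - XR K 3 ^ a * phiR K i ((b : ℤ) + j)
          + XR K 0 ^ (a + d) *
              (phiR K i (j : ℤ) - phiR K ((b : ℤ) + i + j - 3) (3 - (b : ℤ))) = 0 := by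
  intro i hi j hj
  have hbj : 1 ≤ (b : ℤ) ∧ (b : ℤ) + j ≤ 2 := by
    rcases hb with rfl | rfl | rfl <;> omega
  have hi' : 1 ≤ i ∧ i ≤ 3 := by
    rcases hi with rfl | rfl | rfl <;> norm_num
  set e := eps i ((b : ℤ) + j) with he
  have he' : e = min (i + ((b : ℤ) + j)) 3 := eps_eq_min _ _
  have hφ : phiR K ((b : ℤ) + i + j - 3) (3 - b) = phiR K ((b : ℤ) + i + j - e) (e - b) := by
    -- Both sides vanish unless `i + b + j ≥ 3`, and then `e = 3`.
    by_cases h : i + ((b : ℤ) + j) < 3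
    · rw [phiR_eq_zero_of_left K (by omega), phiR_eq_zero_of_left K (by omega)]
    · rw [show e = 3 by omega]
  have h₁ := XR_mul_XR_sub_phiR K (p := i) (q := (b : ℤ) + j) (by omega) (by omega)
  rw [← he, show i + ((b : ℤ) + j) - e = (b : ℤ) + i + j - e by ring] at h₁
  have h₂ := XR_mul_XR_sub_phiR_eq_of_add_eq K (p := (b : ℤ) + i + j - e) (q := e - b)
    (p' := i) (q' := j) (by omega) (by omega) (by omega) (by omega) (by ring)
  rw [psiR_of_mem K a d b (by omega), psiR_of_mem K a d b (by omega), add_sub_cancel, hφ]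
  linear_combination XR K 3 ^ a * h₁ + XR K 0 ^ (a + d) * h₂

/-- Let `b ∈ {1,2,3}` with `b ≠ 3`, `i ∈ {1,2,3}` and `j ∈ {0,…,2−b}`.
Then in `R = K[X₀,X₁,X₂,X₃]`:
`X_iψ(b,j) − X_{b+i+j−ε(i,b+j)}ψ(b,ε(i,b+j)−b) − X₃^aφ(i,b+j)
  + X₀^{a+d}(φ(i,j) − φ(b+i+j−3,3−b)) = 0`,
with the conventions `X_k = 0` for `k ∉ {0,1,2,3}`, `φ(i,j) = φ(j,i)`, `φ(i,j) = 0` unless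
`i,j ∈ {1,2}`, and `ψ(b,j) = 0` unless `j ∈ {0,…,3−b}`. -/
theorem A_identity (K : Type) [Field K] (a d b : ℕ)
    (hb : b ∈ ({1, 2, 3} : Set ℕ)) (hb3 : b ≠ 3) (ha : 1 ≤ a) (hd : 1 ≤ d) :
    ∀ i ∈ ({1, 2, 3} : Set ℤ), ∀ j : ℕ, j ≤ 2 - b →
      XR K i * psiR K a d b (j : ℤ)
          - XR K ((b : ℤ) + i + j - eps i ((b : ℤ) + j)) *
              psiR K a d b (eps i ((b : ℤ) + j) - (b : ℤ))
          - XR K 3 ^ a * phiR K i ((b : ℤ) + j)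
          + XR K 0 ^ (a + d) *
              (phiR K i (j : ℤ) - phiR K ((b : ℤ) + i + j - 3) (3 - (b : ℤ))) = 0 :=
  A_identity_general K a d b hb hb3
end
end

section
/- Suppose b = 3. Then every partial derivative of each of the five generators L(0), L(1), B(1,1), B(1,2), B(2,2) of E₃ with respect to each of the 8 variables of R₃ lies in the prime ideal 𝔓₃ = (X₁,X₂,X₃,X₀,Φ(2,2),Φ(1,2),Φ(1,1)); equivalently, the Jacobian matrix of these generators taken modulo 𝔓₃ is the zero matrix. -/
noncomputable section

open MvPolynomial

variable (K : Type) [Field K] (a d b : ℕ)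

/-- The prime ideal `𝔓₃ = (X₁,X₂,X₃,X₀,Φ(2,2),Φ(1,2),Φ(1,1))` of `R₃`, generated by all
variables except `Ψ(3,0)`. -/
def Pfrak3 : Ideal (Rb K 3) :=
  Ideal.span (MvPolynomial.X '' {v : Vb 3 | v ≠ Sum.inr (Sum.inl 0)})

/-!
Each of the five generators lies in `𝔓₃²`: every monomial of `L(i)` and `B(i,j)` is a product of
at least two variables other than `Ψ(3,0)`. By the Leibniz rule a derivation maps the square of an
ideal into the ideal.
-/

theorem Derivation.map_mem_of_mem_sq {R A : Type*} [CommSemiring R] [CommSemiring A] [Algebra R A]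
    (D : Derivation R A A) {I : Ideal A} {x : A} (hx : x ∈ I ^ 2) : D x ∈ I := by
  rw [sq] at hx
  refine Submodule.mul_induction_on hx (fun y hy z hz => ?_) (fun y z hy hz => ?_)
  · rw [Derivation.leibniz, smul_eq_mul, smul_eq_mul]
    exact add_mem (I.mul_mem_right _ hy) (I.mul_mem_right _ hz)
  · rw [map_add]
    exact add_mem hy hz

theorem X_mem_Pfrak3 {v : Vb 3} (hv : v ≠ Sum.inr (Sum.inl 0)) : (X v : Rb K 3) ∈ Pfrak3 K :=
  Ideal.subset_span ⟨v, hv, rfl⟩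

theorem Xv_mem_Pfrak3 (i : ℤ) : Xv K 3 i ∈ Pfrak3 K := by
  unfold Xv
  split_ifs
  · exact X_mem_Pfrak3 K Sum.inl_ne_inr
  · exact zero_mem _

theorem Phi_mem_Pfrak3 (i j : ℤ) : Phi K 3 i j ∈ Pfrak3 K := by
  unfold Phi
  split_ifs <;> first | exact zero_mem _ | exact X_mem_Pfrak3 K (by simp)

theorem Lp_mem_Pfrak3_sq (i : ℤ) : Lp K 3 i ∈ Pfrak3 K ^ 2 := by
  have h (j k l : ℤ) : Xv K 3 j * Phi K 3 k l ∈ Pfrak3 K ^ 2 :=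
    sq (Pfrak3 K) ▸ Ideal.mul_mem_mul (Xv_mem_Pfrak3 K j) (Phi_mem_Pfrak3 K k l)
  unfold Lp
  split_ifs
  · exact add_mem (sub_mem (h _ _ _) (h _ _ _)) (h _ _ _)
  · exact zero_mem _

theorem Bp_mem_Pfrak3_sq (i j : ℤ) : Bp K a d 3 i j ∈ Pfrak3 K ^ 2 := by
  have hX := Xv_mem_Pfrak3 K
  have hquad :
      Xv K 3 i * Xv K 3 j - Xv K 3 (eps i j) * Xv K 3 (i + j - eps i j) ∈ Pfrak3 K ^ 2 := by
    rw [sq]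
    exact sub_mem (Ideal.mul_mem_mul (hX _) (hX _)) (Ideal.mul_mem_mul (hX _) (hX _))
  have hbinom : Xv K 3 3 ^ a * Xv K 3 (3 : ℕ) - Xv K 3 0 ^ (a + d + 1) ∈ Pfrak3 K := by
    rw [pow_succ]
    exact sub_mem (Ideal.mul_mem_left _ _ (hX _)) (Ideal.mul_mem_left _ _ (hX _))
  unfold Bp
  exact sub_mem (Ideal.mul_mem_right _ _ hquad)
    (sq (Pfrak3 K) ▸ Ideal.mul_mem_mul hbinom (Phi_mem_Pfrak3 K i j))

theorem jacobian_b_three_general (K : Type) [Field K] (a d : ℕ) :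
    ∀ g ∈ ({Lp K 3 0, Lp K 3 1, Bp K a d 3 1 1, Bp K a d 3 1 2, Bp K a d 3 2 2} :
        Set (Rb K 3)),
      ∀ v : Vb 3, MvPolynomial.pderiv v g ∈ Pfrak3 K := by
  intro g hg v
  refine (pderiv v).map_mem_of_mem_sq ?_
  rcases hg with rfl | rfl | rfl | rfl | rfl
  exacts [Lp_mem_Pfrak3_sq K 0, Lp_mem_Pfrak3_sq K 1, Bp_mem_Pfrak3_sq K a d 1 1,
    Bp_mem_Pfrak3_sq K a d 1 2, Bp_mem_Pfrak3_sq K a d 2 2]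

/-- For `b = 3`, every partial derivative of each of the five generators
`L(0), L(1), B(1,1), B(1,2), B(2,2)` of `E₃` with respect to each variable of `R₃` lies in
`𝔓₃`; i.e. the Jacobian matrix of these generators modulo `𝔓₃` is zero. -/
theorem jacobian_b_three (K : Type) [Field K] (a d : ℕ) (ha : 1 ≤ a) (hd : 1 ≤ d)
    (hgcd : Nat.gcd (3 * a + 3) d = 1)
    (hmin : ∀ i : Fin 4, (3 * a + 3 + (i : ℕ) * d) ∉
      AddSubmonoid.closure {x : ℕ | ∃ j : Fin 4, j ≠ i ∧ x = 3 * a + 3 + (j : ℕ) * d}) :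
    ∀ g ∈ ({Lp K 3 0, Lp K 3 1, Bp K a d 3 1 1, Bp K a d 3 1 2, Bp K a d 3 2 2} :
        Set (Rb K 3)),
      ∀ v : Vb 3, MvPolynomial.pderiv v g ∈ Pfrak3 K :=
  jacobian_b_three_general K a d
end
end
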